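/- arXiv:1704.07326 — 6 statements merged into one kernel-verified Lean document; each statement's English description precedes it below -/
import Mathlib

section
/- For every nonnegative function f in L^2(X,μ) on a probability space (X,μ), the variance ‖f − μ(f)‖₂² is at most the integral over a ∈ [0,∞) of μ({f² ≥ a})·(1 − μ({f² ≥ a})). -/
/-!
Write `p t = μ {f² ≥ t}`. By the layer-cake formula `∫ f² = ∫₀^∞ p`, and, applied on `X × X` to
`(x, y) ↦ min (f x ²) (f y ²)`, whose superlevel sets are products, `∫₀^∞ p² = ∫∫ min (f x ²) (f y ²)`.
For `f ≥ 0` this integrand is at most `f x * f y`, so `∫₀^∞ p² ≤ (∫ f)²`, and subtracting from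
`‖f - μ(f)‖₂² = ∫ f² - (∫ f)²` gives the claim.
-/

open MeasureTheory Set

namespace MeasureTheory

variable {α : Type*} [MeasurableSpace α] {μ : Measure α} {f : α → ℝ}

lemma Integrable.integrableOn_measureReal_le (hf : Integrable f μ) (hf₀ : 0 ≤ᵐ[μ] f) :
    IntegrableOn (fun t ↦ μ.real {a | t ≤ f a}) (Ioi 0) := by
  have hanti : Antitone fun t ↦ μ {a | t ≤ f a} :=
    fun _ _ hst ↦ measure_mono fun _ h ↦ hst.trans h
  refine ⟨hanti.measurable.ennreal_toReal.aestronglyMeasurable, ?_⟩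
  calc ∫⁻ t in Ioi 0, ‖μ.real {a | t ≤ f a}‖ₑ
      ≤ ∫⁻ t in Ioi 0, μ {a | t ≤ f a} :=
        lintegral_mono fun _ ↦ (Real.enorm_eq_ofReal ENNReal.toReal_nonneg).trans_le
          ENNReal.ofReal_toReal_le
    _ = ∫⁻ a, ENNReal.ofReal (f a) ∂μ :=
        (lintegral_eq_lintegral_meas_le μ hf₀ hf.aemeasurable).symm
    _ < ⊤ := hf.lintegral_lt_top

lemma integral_sq_measureReal_le_eq_integral_min [IsFiniteMeasure μ] (hf : Integrable f μ)
    (hf₀ : ∀ a, 0 ≤ f a) :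
    ∫ t in Ioi 0, μ.real {a | t ≤ f a} ^ 2 = ∫ z, min (f z.1) (f z.2) ∂μ.prod μ := by
  have hmin : Integrable (fun z : α × α ↦ min (f z.1) (f z.2)) (μ.prod μ) := by
    refine (hf.comp_fst μ).mono (hf.1.comp_fst.inf hf.1.comp_snd) (.of_forall fun z ↦ ?_)
    rw [Real.norm_eq_abs, Real.norm_eq_abs, abs_of_nonneg (hf₀ _),
      abs_of_nonneg (le_min (hf₀ z.1) (hf₀ z.2))]
    exact min_le_left _ _
  rw [hmin.integral_eq_integral_meas_le (.of_forall fun z ↦ le_min (hf₀ _) (hf₀ _))]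
  refine setIntegral_congr_fun measurableSet_Ioi fun t _ ↦ ?_
  have hprod : {z : α × α | t ≤ min (f z.1) (f z.2)} = {a | t ≤ f a} ×ˢ {a | t ≤ f a} :=
    Set.ext fun _ ↦ le_min_iff (α := ℝ)
  rw [hprod, measureReal_prod_prod, sq]

lemma integral_sq_measureReal_le_sq_le_sq_integral [IsProbabilityMeasure μ] (hf : MemLp f 2 μ)
    (hf₀ : ∀ a, 0 ≤ f a) :
    ∫ t in Ioi 0, μ.real {a | t ≤ f a ^ 2} ^ 2 ≤ (∫ a, f a ∂μ) ^ 2 := by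
  have hf₁ : Integrable f μ := hf.integrable one_le_two
  rw [integral_sq_measureReal_le_eq_integral_min hf.integrable_sq fun a ↦ sq_nonneg (f a), sq,
    ← integral_prod_mul]
  refine integral_mono_of_nonneg (.of_forall fun z ↦ le_min (sq_nonneg _) (sq_nonneg _))
    (hf₁.mul_prod hf₁) (.of_forall fun z ↦ ?_)
  show min (f z.1 ^ 2) (f z.2 ^ 2) ≤ f z.1 * f z.2
  rcases le_total (f z.1) (f z.2) with h | h
  · exact (min_le_left _ _).trans (by nlinarith [hf₀ z.1])
  · exact (min_le_right _ _).trans (by nlinarith [hf₀ z.2])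

end MeasureTheory

theorem stmt2_general {X : Type*} [MeasurableSpace X] (μ : Measure X) [IsProbabilityMeasure μ]
    (f : X → ℝ) (hf : MemLp f 2 μ) (hpos : ∀ x, 0 ≤ f x) :
    ∫ x, (f x - ∫ y, f y ∂μ) ^ 2 ∂μ
      ≤ ∫ a in Set.Ioi (0 : ℝ),
          (μ {x | a ≤ (f x) ^ 2}).toReal * (1 - (μ {x | a ≤ (f x) ^ 2}).toReal) := by
  set p : ℝ → ℝ := fun t ↦ μ.real {x | t ≤ f x ^ 2}
  have hp : IntegrableOn p (Ioi 0) :=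
    hf.integrable_sq.integrableOn_measureReal_le (.of_forall fun x ↦ sq_nonneg (f x))
  have hp_sq : IntegrableOn (fun t ↦ p t ^ 2) (Ioi 0) :=
    hp.mono' (hp.1.pow 2) (.of_forall fun t ↦ by
      rw [Real.norm_eq_abs, abs_sq]
      exact pow_le_of_le_one measureReal_nonneg measureReal_le_one two_ne_zero)
  calc ∫ x, (f x - ∫ y, f y ∂μ) ^ 2 ∂μ
      = ∫ x, f x ^ 2 ∂μ - (∫ y, f y ∂μ) ^ 2 := by
        rw [← ProbabilityTheory.variance_eq_integral hf.aemeasurable,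
          ProbabilityTheory.variance_eq_sub hf]
        rfl
    _ ≤ (∫ t in Ioi 0, p t) - ∫ t in Ioi 0, p t ^ 2 := by
        rw [hf.integrable_sq.integral_eq_integral_meas_le (.of_forall fun x ↦ sq_nonneg (f x))]
        gcongr
        exact integral_sq_measureReal_le_sq_le_sq_integral hf hpos
    _ = ∫ t in Ioi 0, p t * (1 - p t) := by
        rw [← integral_sub hp hp_sq]
        congr 1 with t
        ring

/-- For a nonnegative square-integrable function `f` on a probability space `(X, μ)`,
the variance `‖f - μ(f)‖₂²` is at most
`∫_0^∞ μ {f² ≥ a} · (1 - μ {f² ≥ a}) da`. -/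
theorem stmt2 {X : Type*} [MeasurableSpace X] (μ : Measure X) [IsProbabilityMeasure μ]
    (f : X → ℝ) (hmeas : Measurable f) (hf : MemLp f 2 μ) (hpos : ∀ x, 0 ≤ f x) :
    ∫ x, (f x - ∫ y, f y ∂μ) ^ 2 ∂μ
      ≤ ∫ a in Set.Ioi (0 : ℝ),
          (μ {x | a ≤ (f x) ^ 2}).toReal * (1 - (μ {x | a ≤ (f x) ^ 2}).toReal) :=
  stmt2_general μ f hf hpos
end

section
/- For every nonnegative function f in L^2(X,μ) on a probability space (X,μ), the integral over a ∈ [0,∞) of μ({f² ≥ a})² is at most (∫_X f dμ)². -/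
/-!
By the layer cake formula on `X × X`, `(∫ f)² = ∫ f(x) f(y) d(μ ⊗ μ)` is the integral over
`a > 0` of `(μ ⊗ μ) {f(x) f(y) ≥ a}`. For nonnegative `f` this superlevel set contains
`{f² ≥ a} × {f² ≥ a}`, whose measure is `μ {f² ≥ a}²`.
-/

open MeasureTheory

theorem Set.setOf_le_sq_prod_subset {α β : Type*} {f : α → ℝ} {g : β → ℝ}
    (hf : ∀ x, 0 ≤ f x) (hg : ∀ y, 0 ≤ g y) (a : ℝ) :
    {x | a ≤ f x ^ 2} ×ˢ {y | a ≤ g y ^ 2} ⊆ {p | a ≤ f p.1 * g p.2} := by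
  rintro ⟨x, y⟩ ⟨hx, hy⟩
  change a ≤ f x ^ 2 at hx
  change a ≤ g y ^ 2 at hy
  change a ≤ f x * g y
  rcases lt_or_ge a 0 with ha | ha
  · exact ha.le.trans (mul_nonneg (hf x) (hg y))
  · refine (pow_le_pow_iff_left₀ ha (mul_nonneg (hf x) (hg y)) two_ne_zero).mp ?_
    rw [sq, mul_pow]
    exact mul_le_mul hx hy ha (sq_nonneg _)

namespace MeasureTheory

variable {α β : Type*} [MeasurableSpace α] [MeasurableSpace β]

theorem Integrable.integrableOn_measureReal_le_s3 {ν : Measure α} [IsFiniteMeasure ν] {g : α → ℝ}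
    (hg : Integrable g ν) (hg_nn : 0 ≤ᵐ[ν] g) :
    IntegrableOn (fun t => ν.real {a | t ≤ g a}) (Set.Ioi 0) := by
  refine ⟨(Antitone.measurable fun s t hst => measure_mono fun a (h : t ≤ g a) =>
    hst.trans h).ennreal_toReal.aestronglyMeasurable, ?_⟩
  rw [hasFiniteIntegral_iff_ofReal (.of_forall fun t => measureReal_nonneg)]
  calc ∫⁻ t in Set.Ioi 0, ENNReal.ofReal (ν.real {a | t ≤ g a})
      = ∫⁻ t in Set.Ioi 0, ν {a | t ≤ g a} :=
        lintegral_congr fun t => ENNReal.ofReal_toReal (measure_ne_top _ _)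
    _ = ∫⁻ a, ENNReal.ofReal (g a) ∂ν :=
        (lintegral_eq_lintegral_meas_le ν hg_nn hg.aemeasurable).symm
    _ < ⊤ := hg.lintegral_lt_top

theorem sq_integral_eq_integral_measureReal_prod_le {μ : Measure α} [IsFiniteMeasure μ]
    {f : α → ℝ} (hf : Integrable f μ) (hf_nn : ∀ x, 0 ≤ f x) :
    (∫ x, f x ∂μ) ^ 2 = ∫ t in Set.Ioi 0, (μ.prod μ).real {p | t ≤ f p.1 * f p.2} := by
  rw [sq, ← integral_prod_mul, (hf.mul_prod hf).integral_eq_integral_meas_le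
    (.of_forall fun p => mul_nonneg (hf_nn p.1) (hf_nn p.2))]

theorem measureReal_setOf_le_sq_mul_le {μ : Measure α} {ν : Measure β} [IsFiniteMeasure μ]
    [IsFiniteMeasure ν] {f : α → ℝ} {g : β → ℝ} (hf : ∀ x, 0 ≤ f x) (hg : ∀ y, 0 ≤ g y)
    (a : ℝ) :
    μ.real {x | a ≤ f x ^ 2} * ν.real {y | a ≤ g y ^ 2} ≤
      (μ.prod ν).real {p | a ≤ f p.1 * g p.2} := by
  rw [← measureReal_prod_prod]
  exact measureReal_mono (Set.setOf_le_sq_prod_subset hf hg a)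

end MeasureTheory

theorem stmt3_general {X : Type*} [MeasurableSpace X] (μ : Measure X) [IsProbabilityMeasure μ]
    (f : X → ℝ) (hf : MemLp f 2 μ) (hpos : ∀ x, 0 ≤ f x) :
    ∫ a in Set.Ioi (0 : ℝ), ((μ {x | a ≤ (f x) ^ 2}).toReal) ^ 2
      ≤ (∫ x, f x ∂μ) ^ 2 := by
  have hint : Integrable f μ := hf.integrable one_le_two
  rw [sq_integral_eq_integral_measureReal_prod_le hint hpos]
  refine integral_mono_of_nonneg (.of_forall fun a => sq_nonneg _)
    (hint.mul_prod hint |>.integrableOn_measureReal_le (.of_forall fun p =>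
      mul_nonneg (hpos p.1) (hpos p.2))) (.of_forall fun a => ?_)
  exact (sq _).trans_le (measureReal_setOf_le_sq_mul_le hpos hpos a)

/-- For a nonnegative square-integrable function `f` on a probability space `(X, μ)`,
the integral over `a ∈ (0, ∞)` of `μ {f² ≥ a}²` is at most `(∫ f dμ)²`. -/
theorem stmt3 {X : Type*} [MeasurableSpace X] (μ : Measure X) [IsProbabilityMeasure μ]
    (f : X → ℝ) (hmeas : Measurable f) (hf : MemLp f 2 μ) (hpos : ∀ x, 0 ≤ f x) :
    ∫ a in Set.Ioi (0 : ℝ), ((μ {x | a ≤ (f x) ^ 2}).toReal) ^ 2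
      ≤ (∫ x, f x ∂μ) ^ 2 :=
  stmt3_general μ f hf hpos
end

section
/- Let (X,μ) be a standard probability space and θ₁,…,θₙ nonsingular automorphisms of X such that each Radon–Nikodym derivative d(μ∘θₖ)/dμ is bounded above and below by positive constants. If there is κ > 0 such that μ(A)(1−μ(A)) ≤ κ·Σₖ μ(A △ θₖ(A)) for all measurable sets A ⊂ X, then there is κ' > 0 such that ‖f − μ(f)‖₂ ≤ κ'·Σₖ ‖f∘θₖ⁻¹ − f‖₂ for all f ∈ L²(X,μ). -/
/-!
Cheeger's argument. Subtracting a median `m` splits `f - m` into its positive and negative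
parts, each vanishing off a set of measure at most `1/2`. For such an `h ≥ 0` every level set
`{t < h²}` has measure at most `1/2`, where `μ A (1 - μ A) ≥ μ A / 2`, so the hypothesis on sets
bounds `μ {t < h²}` by the measures of its symmetric differences with its translates.
Integrating over `t` (layer cake) gives `‖h‖₂² ≤ 2κ ∑ₖ ‖h² ∘ θₖ⁻¹ - h²‖₁`, and Cauchy–Schwarz
bounds each term by `‖h ∘ θₖ⁻¹ - h‖₂ ‖h ∘ θₖ⁻¹ + h‖₂`, where `μ`-boundedness controls the last
factor by a multiple of `‖h‖₂`. Finally the mean minimises `‖f - c‖₂` over constants `c`.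
-/

open MeasureTheory

/-- A nonsingular automorphism `θ` of `(X, μ)` is `μ`-bounded if the Radon–Nikodym
derivative `d(μ ∘ θ)/dμ` is bounded above and below by positive constants; equivalently
`c • μ ≤ μ.map θ ≤ C • μ` for some `0 < c` and `C < ∞`. -/
def MuBounded {X : Type*} [MeasurableSpace X] (μ : Measure X) (θ : X ≃ᵐ X) : Prop :=
  ∃ c C : ENNReal, 0 < c ∧ C ≠ ⊤ ∧ c • μ ≤ μ.map θ ∧ μ.map θ ≤ C • μ

open ProbabilityTheory Set Filter Topology
open scoped ENNReal symmDiff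

section

variable {X : Type*} [MeasurableSpace X] {μ : Measure X}

section Nonsingular

theorem MuBounded.exists_map_symm_le_smul [IsFiniteMeasure μ] {θ : X ≃ᵐ X}
    (h : MuBounded μ θ) : ∃ C : ℝ≥0∞, C ≠ ∞ ∧ μ.map θ.symm ≤ C • μ := by
  obtain ⟨c, -, hc, -, hle, -⟩ := h
  refine ⟨c⁻¹, ENNReal.inv_ne_top.mpr hc.ne', fun s => ?_⟩
  have := Measure.map_mono hle θ.symm.measurable s
  rw [Measure.map_smul, Measure.map_map θ.symm.measurable θ.measurable,
    θ.symm_comp_self, Measure.map_id, Measure.smul_apply, smul_eq_mul] at this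
  rw [Measure.smul_apply, smul_eq_mul, ← ENNReal.div_eq_inv_mul,
    ENNReal.le_div_iff_mul_le (.inl hc.ne') (.inr (measure_ne_top μ s)), mul_comm]
  exact this

theorem exists_forall_map_symm_le_smul [IsFiniteMeasure μ] {ι : Type*} [Fintype ι]
    {θ : ι → X ≃ᵐ X} (h : ∀ k, MuBounded μ (θ k)) :
    ∃ C : ℝ≥0∞, C ≠ ∞ ∧ ∀ k, μ.map (θ k).symm ≤ C • μ := by
  choose C hC hle using fun k => (h k).exists_map_symm_le_smul
  refine ⟨∑ k, C k, ENNReal.sum_ne_top.mpr fun k _ => hC k, fun k => (hle k).trans ?_⟩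
  gcongr
  exact Finset.single_le_sum (fun j _ => zero_le) (Finset.mem_univ k)

variable {E : Type*} [NormedAddCommGroup E] {θ : X → X} {C : ℝ≥0∞} {f : X → E}

theorem eLpNorm_comp_le_of_map_le_smul (hθ : Measurable θ) (h : μ.map θ ≤ C • μ)
    (hf : AEStronglyMeasurable f μ) {p : ℝ≥0∞} (hp : p ≠ ∞) :
    eLpNorm (f ∘ θ) p μ ≤ C ^ (1 / p).toReal * eLpNorm f p μ := by
  rw [← eLpNorm_map_measure (hf.mono_ac (Measure.absolutelyContinuous_of_le_smul h))
    hθ.aemeasurable, ← smul_eq_mul, ← eLpNorm_smul_measure_of_ne_top hp]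
  exact eLpNorm_mono_measure f h

theorem MeasureTheory.MemLp.comp_of_map_le_smul (hθ : Measurable θ) (hC : C ≠ ∞)
    (h : μ.map θ ≤ C • μ) {p : ℝ≥0∞} (hf : MemLp f p μ) : MemLp (f ∘ θ) p μ :=
  (memLp_map_measure_iff (hf.1.mono_ac (Measure.absolutelyContinuous_of_le_smul h))
    hθ.aemeasurable).mp ((hf.smul_measure hC).mono_measure h)

theorem eLpNorm_comp_add_le_of_map_le_smul (hθ : Measurable θ) (h : μ.map θ ≤ C • μ)
    (hf : AEStronglyMeasurable f μ) :
    eLpNorm (f ∘ θ + f) 2 μ ≤ (C ^ (1 / 2 : ℝ) + 1) * eLpNorm f 2 μ := by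
  have hfθ : AEStronglyMeasurable (f ∘ θ) μ :=
    hf.comp_quasiMeasurePreserving ⟨hθ, Measure.absolutelyContinuous_of_le_smul h⟩
  calc eLpNorm (f ∘ θ + f) 2 μ ≤ eLpNorm (f ∘ θ) 2 μ + eLpNorm f 2 μ :=
        eLpNorm_add_le hfθ hf one_le_two
    _ ≤ C ^ (1 / 2 : ℝ) * eLpNorm f 2 μ + eLpNorm f 2 μ := by
        gcongr
        have := eLpNorm_comp_le_of_map_le_smul hθ h hf (p := 2) ENNReal.ofNat_ne_top
        rwa [show ((1 : ℝ≥0∞) / 2).toReal = (1 / 2 : ℝ) by norm_num] at this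
    _ = (C ^ (1 / 2 : ℝ) + 1) * eLpNorm f 2 μ := by ring

end Nonsingular

section L2

theorem eLpNorm_two_sq (u : X → ℝ) :
    eLpNorm u 2 μ ^ 2 = ∫⁻ x, ENNReal.ofReal (u x ^ 2) ∂μ := by
  have := eLpNorm_nnreal_pow_eq_lintegral (f := u) (μ := μ) (p := 2) two_ne_zero
  simp only [NNReal.coe_ofNat, ENNReal.coe_ofNat, ENNReal.rpow_ofNat] at this
  rw [this]
  refine lintegral_congr fun x => ?_
  rw [Real.enorm_eq_ofReal_abs, ← ENNReal.ofReal_pow (abs_nonneg _), sq_abs]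

theorem toReal_eLpNorm_two {u : X → ℝ} (hu : AEStronglyMeasurable u μ) :
    (eLpNorm u 2 μ).toReal = √(∫ x, u x ^ 2 ∂μ) := by
  rw [toReal_eLpNorm hu, lpNorm_eq_integral_norm_rpow_toReal two_ne_zero ENNReal.ofNat_ne_top hu]
  simp [Real.sqrt_eq_rpow]

theorem lintegral_abs_sq_sub_sq_le {u v : X → ℝ} (hu : AEStronglyMeasurable u μ)
    (hv : AEStronglyMeasurable v μ) :
    ∫⁻ x, ENNReal.ofReal |u x ^ 2 - v x ^ 2| ∂μ ≤ eLpNorm (u - v) 2 μ * eLpNorm (u + v) 2 μ := by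
  have key := eLpNorm_le_eLpNorm_mul_eLpNorm_of_nnnorm (p := 2) (q := 2) (r := 1)
    (hu.sub hv) (hu.add hv) (· * ·) 1 (ae_of_all _ fun x => by simp [nnnorm_mul])
  rw [ENNReal.coe_one, one_mul, eLpNorm_one_eq_lintegral_enorm] at key
  refine le_of_eq_of_le (lintegral_congr fun x => ?_) key
  rw [Real.enorm_eq_ofReal_abs, Pi.sub_apply, Pi.add_apply, mul_comm, ← sq_sub_sq]

theorem integral_sub_integral_sq_le [IsProbabilityMeasure μ] {f : X → ℝ}
    (hf : AEStronglyMeasurable f μ) (m : ℝ) :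
    ∫ x, (f x - ∫ y, f y ∂μ) ^ 2 ∂μ ≤ ∫ x, (f x - m) ^ 2 ∂μ := by
  rw [← variance_eq_integral hf.aemeasurable, ← variance_sub_const hf m]
  exact variance_le_expectation_sq (hf.sub aestronglyMeasurable_const)

end L2

section LayerCake

theorem restrict_Ioi_zero_Iio_symmDiff_Iio {a b : ℝ} (ha : 0 ≤ a) (hb : 0 ≤ b) :
    volume.restrict (Ioi 0) (Iio a ∆ Iio b) = ENNReal.ofReal |a - b| := by
  wlog hab : a ≤ b generalizing a b
  · rw [symmDiff_comm, abs_sub_comm]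
    exact this hb ha (le_of_not_ge hab)
  rw [symmDiff_of_le (Iio_subset_Iio hab), Iio_sdiff_Iio,
    Measure.restrict_congr_set Ioi_ae_eq_Ici, Measure.restrict_apply measurableSet_Ico,
    inter_eq_left.mpr (Ico_subset_Ici_self.trans (Ici_subset_Ici.mpr ha)), Real.volume_Ico,
    abs_sub_comm, abs_of_nonneg (sub_nonneg.mpr hab)]

variable {a b : X → ℝ}

theorem measurableSet_symmDiff_setOf_lt (ha : Measurable a) (hb : Measurable b) :
    MeasurableSet ({p : ℝ × X | p.1 < a p.2} ∆ {p | p.1 < b p.2}) :=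
  (measurableSet_lt measurable_fst (ha.comp measurable_snd)).symmDiff
    (measurableSet_lt measurable_fst (hb.comp measurable_snd))

theorem measurable_measure_symmDiff_setOf_lt [SFinite μ] (ha : Measurable a)
    (hb : Measurable b) : Measurable fun t : ℝ => μ ({x | t < a x} ∆ {x | t < b x}) :=
  measurable_measure_prodMk_left (measurableSet_symmDiff_setOf_lt ha hb)

theorem lintegral_measure_symmDiff_setOf_lt [SFinite μ] (ha : Measurable a) (hb : Measurable b)
    (ha0 : 0 ≤ a) (hb0 : 0 ≤ b) :
    ∫⁻ t in Ioi 0, μ ({x | t < a x} ∆ {x | t < b x}) = ∫⁻ x, ENNReal.ofReal |a x - b x| ∂μ := by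
  have hS := measurableSet_symmDiff_setOf_lt ha hb
  calc ∫⁻ t in Ioi 0, μ ({x | t < a x} ∆ {x | t < b x})
      = (volume.restrict (Ioi 0)).prod μ ({p : ℝ × X | p.1 < a p.2} ∆ {p | p.1 < b p.2}) :=
        (Measure.prod_apply hS).symm
    _ = ∫⁻ x, volume.restrict (Ioi 0) (Iio (a x) ∆ Iio (b x)) ∂μ := Measure.prod_apply_symm hS
    _ = ∫⁻ x, ENNReal.ofReal |a x - b x| ∂μ :=
        lintegral_congr fun x => restrict_Ioi_zero_Iio_symmDiff_Iio (ha0 x) (hb0 x)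

end LayerCake

section Median

theorem exists_median_real (ν : Measure ℝ) [IsProbabilityMeasure ν] :
    ∃ m, ν.real (Iio m) ≤ 1 / 2 ∧ ν.real (Ioi m) ≤ 1 / 2 := by
  set F := cdf ν
  set S := {t | 1 / 2 ≤ F t}
  have hS : S.Nonempty := ((tendsto_cdf_atTop ν).eventually_const_le (by norm_num)).exists
  have hSbdd : BddBelow S := by
    obtain ⟨s, hs⟩ := ((tendsto_cdf_atBot ν).eventually_lt_const
      (by norm_num : (0 : ℝ) < 1 / 2)).exists_forall_of_atBot
    exact ⟨s, fun t ht => le_of_not_gt fun hts => (hs t hts.le).not_ge ht⟩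
  refine ⟨sInf S, ?_, ?_⟩
  · rw [measureReal_def, ← measure_cdf ν, F.measure_Iio (tendsto_cdf_atBot ν), sub_zero,
      ENNReal.toReal_ofReal ((cdf_nonneg ν _).trans ((monotone_cdf ν).le_leftLim (sub_one_lt _))),
      (monotone_cdf ν).leftLim_eq_sSup]
    refine csSup_le (nonempty_Iio.image F) ?_
    rintro _ ⟨t, ht, rfl⟩
    exact le_of_not_ge fun h => (not_le.mpr ht) (csInf_le hSbdd h)
  · have hFm : 1 / 2 ≤ F (sInf S) := by
      refine ge_of_tendsto
        ((F.right_continuous _).mono_left (nhdsWithin_mono _ Ioi_subset_Ici_self))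
        (eventually_nhdsWithin_of_forall fun t ht => ?_)
      obtain ⟨s, hs, hst⟩ := exists_lt_of_csInf_lt hS ht
      exact hs.trans (monotone_cdf ν hst.le)
    rw [← compl_Iic, probReal_compl_eq_one_sub measurableSet_Iic, ← cdf_eq_real]
    linarith

theorem exists_median [IsProbabilityMeasure μ] {f : X → ℝ} (hf : Measurable f) :
    ∃ m, μ.real {x | f x < m} ≤ 1 / 2 ∧ μ.real {x | m < f x} ≤ 1 / 2 := by
  have := Measure.isProbabilityMeasure_map (μ := μ) hf.aemeasurable
  obtain ⟨m, hlt, hgt⟩ := exists_median_real (μ.map f)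
  rw [map_measureReal_apply hf measurableSet_Iio] at hlt
  rw [map_measureReal_apply hf measurableSet_Ioi] at hgt
  exact ⟨m, hlt, hgt⟩

end Median

section Cheeger

variable {ι : Type*} [Fintype ι] {θ : ι → X ≃ᵐ X} {κ : ℝ}

theorem measure_le_of_measureReal_le_half [IsFiniteMeasure μ]
    (hsets : ∀ A : Set X, MeasurableSet A →
      (μ A).toReal * (1 - (μ A).toReal) ≤ κ * ∑ k, (μ (A ∆ (θ k '' A))).toReal)
    {A : Set X} (hA : MeasurableSet A) (hA2 : μ.real A ≤ 1 / 2) :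
    μ A ≤ ENNReal.ofReal (2 * κ) * ∑ k, μ (A ∆ (θ k '' A)) := by
  have hgap : μ.real A * (1 - μ.real A) ≤ κ * ∑ k, μ.real (A ∆ (θ k '' A)) := hsets A hA
  have hreal : μ.real A ≤ 2 * κ * ∑ k, μ.real (A ∆ (θ k '' A)) := by
    nlinarith [measureReal_nonneg (μ := μ) (s := A)]
  calc μ A = ENNReal.ofReal (μ.real A) := (ofReal_measureReal (measure_ne_top μ A)).symm
    _ ≤ ENNReal.ofReal (2 * κ * ∑ k, μ.real (A ∆ (θ k '' A))) := ENNReal.ofReal_le_ofReal hreal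
    _ = ENNReal.ofReal (2 * κ) * ∑ k, μ (A ∆ (θ k '' A)) := by
      rw [ENNReal.ofReal_mul' (by positivity),
        ENNReal.ofReal_sum_of_nonneg fun _ _ => measureReal_nonneg]
      exact congrArg _ (Finset.sum_congr rfl fun _ _ => ofReal_measureReal)

theorem lintegral_sq_le_of_measureReal_pos_le_half [IsFiniteMeasure μ]
    (hsets : ∀ A : Set X, MeasurableSet A →
      (μ A).toReal * (1 - (μ A).toReal) ≤ κ * ∑ k, (μ (A ∆ (θ k '' A))).toReal)
    {h : X → ℝ} (hh : Measurable h) (hh0 : 0 ≤ h) (hpos : μ.real {x | 0 < h x} ≤ 1 / 2) :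
    ∫⁻ x, ENNReal.ofReal (h x ^ 2) ∂μ ≤
      ENNReal.ofReal (2 * κ) * ∑ k, ∫⁻ x, ENNReal.ofReal |h ((θ k).symm x) ^ 2 - h x ^ 2| ∂μ := by
  have hh2 : Measurable fun x => h x ^ 2 := hh.pow_const 2
  have hθh2 k : Measurable fun x => h ((θ k).symm x) ^ 2 :=
    (hh.comp (θ k).symm.measurable).pow_const 2
  simp_rw [lintegral_eq_lintegral_meas_lt μ (ae_of_all _ fun x => sq_nonneg (h x)) hh2.aemeasurable,
    ← lintegral_measure_symmDiff_setOf_lt (hθh2 _) hh2 (fun x => sq_nonneg _)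
      (fun x => sq_nonneg (h x))]
  rw [← lintegral_finsetSum _ fun k _ => measurable_measure_symmDiff_setOf_lt (hθh2 k) hh2,
    ← lintegral_const_mul' _ _ ENNReal.ofReal_ne_top]
  refine setLIntegral_mono' measurableSet_Ioi fun t ht => ?_
  have hA : MeasurableSet {x | t < h x ^ 2} := measurableSet_lt measurable_const hh2
  have hsub : {x | t < h x ^ 2} ⊆ {x | 0 < h x} := fun x (hx : t < h x ^ 2) =>
    (show (0 : ℝ) ≤ h x from hh0 x).lt_of_ne' fun h0 => by
      rw [h0] at hx; linarith [mem_Ioi.mp ht]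
  convert measure_le_of_measureReal_le_half hsets hA ((measureReal_mono hsub).trans hpos)
    using 4 with k
  rw [symmDiff_comm, MeasurableEquiv.image_eq_preimage_symm]
  rfl

theorem eLpNorm_le_of_measureReal_pos_le_half [IsFiniteMeasure μ] {C : ℝ≥0∞}
    (hθ : ∀ k, μ.map (θ k).symm ≤ C • μ)
    (hsets : ∀ A : Set X, MeasurableSet A →
      (μ A).toReal * (1 - (μ A).toReal) ≤ κ * ∑ k, (μ (A ∆ (θ k '' A))).toReal)
    {h : X → ℝ} (hh : Measurable h) (hh0 : 0 ≤ h) (hh2 : MemLp h 2 μ)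
    (hpos : μ.real {x | 0 < h x} ≤ 1 / 2) :
    eLpNorm h 2 μ ≤ ENNReal.ofReal (2 * κ) * (C ^ (1 / 2 : ℝ) + 1) *
      ∑ k, eLpNorm (h ∘ (θ k).symm - h) 2 μ := by
  set E := eLpNorm h 2 μ
  have hθh k : AEStronglyMeasurable (h ∘ (θ k).symm) μ :=
    (hh.comp (θ k).symm.measurable).aestronglyMeasurable
  have key : E * E ≤ (ENNReal.ofReal (2 * κ) * (C ^ (1 / 2 : ℝ) + 1) *
      ∑ k, eLpNorm (h ∘ (θ k).symm - h) 2 μ) * E :=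
    calc E * E = ∫⁻ x, ENNReal.ofReal (h x ^ 2) ∂μ := by rw [← sq, eLpNorm_two_sq]
      _ ≤ ENNReal.ofReal (2 * κ) *
          ∑ k, ∫⁻ x, ENNReal.ofReal |h ((θ k).symm x) ^ 2 - h x ^ 2| ∂μ :=
        lintegral_sq_le_of_measureReal_pos_le_half hsets hh hh0 hpos
      _ ≤ ENNReal.ofReal (2 * κ) *
          ∑ k, eLpNorm (h ∘ (θ k).symm - h) 2 μ * eLpNorm (h ∘ (θ k).symm + h) 2 μ := by
        gcongr with k
        exact lintegral_abs_sq_sub_sq_le (hθh k) hh.aestronglyMeasurable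
      _ ≤ ENNReal.ofReal (2 * κ) *
          ∑ k, eLpNorm (h ∘ (θ k).symm - h) 2 μ * ((C ^ (1 / 2 : ℝ) + 1) * E) := by
        gcongr with k
        exact eLpNorm_comp_add_le_of_map_le_smul (θ k).symm.measurable (hθ k)
          hh.aestronglyMeasurable
      _ = _ := by rw [← Finset.sum_mul]; ring
  rcases eq_or_ne E 0 with hE | hE
  · rw [hE]
    exact zero_le
  · exact (ENNReal.mul_le_mul_iff_left hE hh2.eLpNorm_ne_top).mp key

theorem eLpNorm_sub_const_le_of_median [IsFiniteMeasure μ] {C : ℝ≥0∞}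
    (hθ : ∀ k, μ.map (θ k).symm ≤ C • μ)
    (hsets : ∀ A : Set X, MeasurableSet A →
      (μ A).toReal * (1 - (μ A).toReal) ≤ κ * ∑ k, (μ (A ∆ (θ k '' A))).toReal)
    {f : X → ℝ} (hf : Measurable f) (hf2 : MemLp f 2 μ) {m : ℝ}
    (hlt : μ.real {x | f x < m} ≤ 1 / 2) (hgt : μ.real {x | m < f x} ≤ 1 / 2) :
    eLpNorm (f - fun _ => m) 2 μ ≤ 2 * (ENNReal.ofReal (2 * κ) * (C ^ (1 / 2 : ℝ) + 1)) *
      ∑ k, eLpNorm (f ∘ (θ k).symm - f) 2 μ := by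
  set K := ENNReal.ofReal (2 * κ) * (C ^ (1 / 2 : ℝ) + 1)
  have hpart (u : X → ℝ) (hu : Measurable u) (hu2 : MemLp u 2 μ)
      (hpos : μ.real {x | 0 < u x} ≤ 1 / 2)
      (hdiff : ∀ k x, |u ((θ k).symm x) - u x| = |f ((θ k).symm x) - f x|) :
      eLpNorm u⁺ 2 μ ≤ K * ∑ k, eLpNorm (f ∘ (θ k).symm - f) 2 μ := by
    refine (eLpNorm_le_of_measureReal_pos_le_half (h := u⁺) hθ hsets (hu.max measurable_const)
      (posPart_nonneg u) (hu2.sup .zero) ?_).trans ?_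
    · rwa [show {x | 0 < u⁺ x} = {x | 0 < u x} by ext; simp]
    gcongr with k
    refine eLpNorm_mono fun x => ?_
    simp only [Pi.sub_apply, Function.comp_apply, Real.norm_eq_abs]
    exact (abs_max_sub_max_le_abs _ _ 0).trans (hdiff k x).le
  set g := f - fun _ => m
  have hg : Measurable g := hf.sub measurable_const
  have hg2 : MemLp g 2 μ := hf2.sub (memLp_const m)
  calc eLpNorm g 2 μ = eLpNorm (g⁺ - g⁻) 2 μ := by rw [posPart_sub_negPart]
    _ ≤ eLpNorm g⁺ 2 μ + eLpNorm g⁻ 2 μ :=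
      eLpNorm_sub_le (hg.max measurable_const).aestronglyMeasurable
        (hg.neg.max measurable_const).aestronglyMeasurable one_le_two
    _ ≤ K * ∑ k, eLpNorm (f ∘ (θ k).symm - f) 2 μ +
        K * ∑ k, eLpNorm (f ∘ (θ k).symm - f) 2 μ := by
      rw [← posPart_neg]
      refine add_le_add (hpart g hg hg2 (by simpa [g] using hgt) fun k x => ?_)
        (hpart (-g) hg.neg hg2.neg (by simpa [g] using hlt) fun k x => ?_)
      · simp [g]
      · simp only [g, Pi.neg_apply, Pi.sub_apply]
        rw [← abs_neg]
        ring_nf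
    _ = 2 * K * ∑ k, eLpNorm (f ∘ (θ k).symm - f) 2 μ := by ring

theorem exists_eLpNorm_sub_const_le [IsProbabilityMeasure μ] {C : ℝ≥0∞}
    (hθ : ∀ k, μ.map (θ k).symm ≤ C • μ)
    (hsets : ∀ A : Set X, MeasurableSet A →
      (μ A).toReal * (1 - (μ A).toReal) ≤ κ * ∑ k, (μ (A ∆ (θ k '' A))).toReal)
    {f : X → ℝ} (hf : MemLp f 2 μ) :
    ∃ m : ℝ, eLpNorm (f - fun _ => m) 2 μ ≤
      2 * (ENNReal.ofReal (2 * κ) * (C ^ (1 / 2 : ℝ) + 1)) *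
        ∑ k, eLpNorm (f ∘ (θ k).symm - f) 2 μ := by
  set f' := hf.1.mk f
  have hf' : Measurable f' := hf.1.stronglyMeasurable_mk.measurable
  have hff' : f =ᵐ[μ] f' := hf.1.ae_eq_mk
  obtain ⟨m, hlt, hgt⟩ := exists_median (μ := μ) hf'
  refine ⟨m, ?_⟩
  have hcomp k : f ∘ (θ k).symm - f =ᵐ[μ] f' ∘ (θ k).symm - f' :=
    ((Measure.QuasiMeasurePreserving.mk (θ k).symm.measurable
      (Measure.absolutelyContinuous_of_le_smul (hθ k))).ae_eq hff').sub hff'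
  simp_rw [eLpNorm_congr_ae (hff'.sub EventuallyEq.rfl), eLpNorm_congr_ae (hcomp _)]
  exact eLpNorm_sub_const_le_of_median hθ hsets hf' (hf.ae_eq hff') hlt hgt

end Cheeger

end

/-- If a spectral-gap inequality holds for indicator functions of measurable sets, then a
spectral-gap inequality (with a possibly different constant) holds for all of `L²(X, μ)`. -/
theorem stmt4 {X : Type*} [MeasurableSpace X] (μ : Measure X) [IsProbabilityMeasure μ]
    (n : ℕ) (θ : Fin n → X ≃ᵐ X) (hbdd : ∀ k, MuBounded μ (θ k))
    (κ : ℝ) (hκ : 0 < κ)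
    (hsets : ∀ A : Set X, MeasurableSet A →
      (μ A).toReal * (1 - (μ A).toReal) ≤ κ * ∑ k, (μ (symmDiff A ((θ k) '' A))).toReal) :
    ∃ κ' : ℝ, 0 < κ' ∧ ∀ f : X → ℝ, MemLp f 2 μ →
      Real.sqrt (∫ x, (f x - ∫ y, f y ∂μ) ^ 2 ∂μ)
        ≤ κ' * ∑ k, Real.sqrt (∫ x, (f ((θ k).symm x) - f x) ^ 2 ∂μ) := by
  obtain ⟨C, hC, hθ⟩ := exists_forall_map_symm_le_smul hbdd
  set K := 2 * (ENNReal.ofReal (2 * κ) * (C ^ (1 / 2 : ℝ) + 1))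
  have hK : K ≠ ∞ := by finiteness
  refine ⟨K.toReal, ENNReal.toReal_pos (by positivity) hK, fun f hf => ?_⟩
  obtain ⟨m, hm⟩ := exists_eLpNorm_sub_const_le hθ hsets hf
  have hΔ k : MemLp (f ∘ (θ k).symm - f) 2 μ :=
    (hf.comp_of_map_le_smul (θ k).symm.measurable hC (hθ k)).sub hf
  calc √(∫ x, (f x - ∫ y, f y ∂μ) ^ 2 ∂μ) ≤ √(∫ x, (f x - m) ^ 2 ∂μ) :=
        Real.sqrt_le_sqrt (integral_sub_integral_sq_le hf.1 m)
    _ = (eLpNorm (f - fun _ => m) 2 μ).toReal :=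
        (toReal_eLpNorm_two (hf.1.sub aestronglyMeasurable_const)).symm
    _ ≤ (K * ∑ k, eLpNorm (f ∘ (θ k).symm - f) 2 μ).toReal :=
        ENNReal.toReal_mono
          (ENNReal.mul_ne_top hK (ENNReal.sum_ne_top.mpr fun k _ => (hΔ k).eLpNorm_ne_top)) hm
    _ = K.toReal * ∑ k, √(∫ x, (f ((θ k).symm x) - f x) ^ 2 ∂μ) := by
        rw [ENNReal.toReal_mul, ENNReal.toReal_sum fun k _ => (hΔ k).eLpNorm_ne_top]
        simp_rw [toReal_eLpNorm_two (hΔ _).1]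
        rfl
end

section
/- Let G = ℤ/2 ∗ ℤ/3 be the free product of cyclic groups of orders 2 and 3. Then for every g ∈ G with g ≠ 1, the conjugacy class {γgγ⁻¹ : γ ∈ G} is infinite. -/
/-!
Map `ℤ/2 ∗ ℤ/3` to `PGL(2, ℝ)` by sending the generators to the classes of
`S = !![0, -1; 1, 0]` and `U = !![0, 1; -1, 1]`, of orders 2 and 3 modulo scalars. On the upper
half plane `S` maps the half plane `re z > 0` into `re z < 0`, while `U` and `U²` map the left
one into the right one, so the ping-pong lemma makes this map injective.

If the conjugacy class of `g` is finite, its centralizer has finite index, so `g` commutes with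
a positive power of each of the two products of the generators. These map to the unipotent
matrices `SU = !![1, -1; 0, 1]` and `US = !![1, 0; 1, 1]`. A lift `N` of the image of `g`
commutes with their powers up to a scalar, which must be `1` because they have trace `2`. So `N`
commutes with both elementary matrices and is scalar, hence `g` maps to `1` and `g = 1`.
-/

open Monoid
open scoped Monoid.Coprod

theorem exists_pow_commute_of_finite_conjugates {G : Type*} [Group G] {g : G}
    (hfin : {h | ∃ γ : G, γ * g * γ⁻¹ = h}.Finite) (x : G) :
    ∃ n, 0 < n ∧ Commute g (x ^ n) := by
  have horbit : MulAction.orbit (ConjAct G) g = {h | ∃ γ : G, γ * g * γ⁻¹ = h} := by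
    ext h
    rw [ConjAct.mem_orbit_conjAct, isConj_comm, isConj_iff]
    rfl
  have hindex : (MulAction.stabilizer (ConjAct G) g).index ≠ 0 := by
    rw [MulAction.index_stabilizer, horbit]
    exact ((Set.ncard_pos hfin).2 ⟨g, 1, by simp⟩).ne'
  obtain ⟨n, hn, -, hx⟩ := Subgroup.exists_pow_mem_of_index_ne_zero hindex (ConjAct.toConjAct x)
  refine ⟨n, hn, ?_⟩
  rw [MulAction.mem_stabilizer_iff, ← map_pow, ConjAct.toConjAct_smul] at hx
  exact (mul_inv_eq_iff_eq_mul.1 hx).symm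

namespace ZMod

variable {G : Type*} [Group G] {n : ℕ} {g : G}

def powMonoidHom (n : ℕ) (g : G) (hg : g ^ n = 1) : Multiplicative (ZMod n) →* G :=
  (ZMod.lift n ⟨zmultiplesHom (Additive G) (.ofMul g),
    by simpa using congrArg Additive.ofMul hg⟩).toMultiplicativeLeft

theorem powMonoidHom_ofAdd_natCast (hg : g ^ n = 1) (k : ℕ) :
    powMonoidHom n g hg (.ofAdd (k : ZMod n)) = g ^ k := by
  rw [← Int.cast_natCast, powMonoidHom, AddMonoidHom.toMultiplicativeLeft_apply_apply,
    toAdd_ofAdd, ZMod.lift_coe]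
  simp

theorem powMonoidHom_ofAdd_one (hg : g ^ n = 1) : powMonoidHom n g hg (.ofAdd 1) = g := by
  simpa using powMonoidHom_ofAdd_natCast hg 1

theorem powMonoidHom_apply [NeZero n] (hg : g ^ n = 1) (x : Multiplicative (ZMod n)) :
    powMonoidHom n g hg x = g ^ (Multiplicative.toAdd x).val := by
  rw [← powMonoidHom_ofAdd_natCast hg, natCast_zmod_val, ofAdd_toAdd]

end ZMod

namespace Monoid.Coprod

open Cardinal Pointwise

universe u

variable {M N : Type u} [Group M] [Group N]

instance instGroupCond : ∀ b : Bool, Group (cond b M N)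
  | true => ‹Group M›
  | false => ‹Group N›

def toCoprodI : M ∗ N →* CoprodI (fun b : Bool => cond b M N) :=
  lift (CoprodI.of (M := fun b : Bool => cond b M N) (i := true))
    (CoprodI.of (M := fun b : Bool => cond b M N) (i := false))

def ofCoprodI : CoprodI (fun b : Bool => cond b M N) →* M ∗ N :=
  CoprodI.lift fun | true => inl | false => inr

theorem ofCoprodI_comp_toCoprodI : ofCoprodI.comp toCoprodI = MonoidHom.id (M ∗ N) := by
  ext <;> simp [toCoprodI, ofCoprodI]

theorem toCoprodI_injective : Function.Injective (toCoprodI (M := M) (N := N)) :=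
  Function.LeftInverse.injective (g := ofCoprodI) fun x => by
    simpa using DFunLike.congr_fun ofCoprodI_comp_toCoprodI x

theorem lift_injective_of_ping_pong {G α : Type*} [Group G] [MulAction G α]
    (f : M →* G) (g : N →* G) (hcard : 3 ≤ #M ∨ 3 ≤ #N) {X Y : Set α}
    (hX : X.Nonempty) (hY : Y.Nonempty) (hXY : Disjoint X Y)
    (hf : ∀ m : M, m ≠ 1 → f m • Y ⊆ X) (hg : ∀ n : N, n ≠ 1 → g n • X ⊆ Y) :
    Function.Injective (lift f g) := by
  let F : ∀ b : Bool, cond b M N →* G := fun | true => f | false => g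
  have hlift : lift f g = (CoprodI.lift F).comp toCoprodI := by
    ext <;> simp [toCoprodI, F]
  rw [hlift, MonoidHom.coe_comp]
  refine (CoprodI.lift_injective_of_ping_pong F ?_ (fun b => cond b X Y) ?_ ?_ ?_).comp
    toCoprodI_injective
  · rcases hcard with h | h
    · exact Or.inr ⟨true, h⟩
    · exact Or.inr ⟨false, h⟩
  · rintro (_ | _)
    exacts [hY, hX]
  · rintro (_ | _) (_ | _) h <;> simp_all [Function.onFun, disjoint_comm]
  · rintro (_ | _) (_ | _) h <;> simp_all [F]

end Monoid.Coprod

namespace Matrix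

variable {n R : Type*} [Fintype n] [DecidableEq n]

theorem transvection_pow [CommRing R] {i j : n} (hij : i ≠ j) (c : R) (k : ℕ) :
    transvection i j c ^ k = transvection i j (k * c) := by
  induction k with
  | zero => simp [transvection]
  | succ k ih =>
    rw [pow_succ, ih, transvection_mul_transvection_same _ _ hij]
    push_cast
    ring_nf

theorem commute_single_of_commute_transvection [Field R] {i j : n} {c : R} (hc : c ≠ 0)
    {M : Matrix n n R} (h : Commute (transvection i j c) M) : Commute (single i j 1) M := by
  have hc' : Commute (single i j c) M := by
    simpa [transvection] using h.sub_left (Commute.one_left M)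
  simpa [smul_single, inv_mul_cancel₀ hc] using hc'.smul_left c⁻¹

namespace GeneralLinearGroup

open ProjGenLinGroup

theorem commute_of_commute_mk_of_trace_ne_zero [CommRing R] [IsDomain R] {A B : GL n R}
    (h : Commute (mk A) (mk B)) (hB : trace (B : Matrix n n R) ≠ 0) : Commute A B := by
  obtain ⟨u, hu⟩ := mk_eq_mk_iff.1 (show mk (A * B) = mk (B * A) by simpa using h.eq)
  have hconj : B * scalar n u = A⁻¹ * B * A := by
    rw [mul_assoc, ← hu]
    group
  have hu1 : u = 1 := by
    have htr := congrArg (fun X : GL n R => trace (X : Matrix n n R)) hconj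
    simp only [Units.val_mul, coe_scalar, trace_units_conj', scalar_apply,
      ← smul_one_eq_diagonal, Matrix.mul_smul, mul_one, trace_smul, smul_eq_mul] at htr
    exact Units.val_eq_one.1 ((mul_eq_right₀ hB).1 htr)
  rwa [hu1, map_one, mul_one] at hu

theorem commute_single_of_commute_mk_transvection [Field R] [CharZero R] {N T : GL n R}
    {i j : n} (hij : i ≠ j) {c : R} (hc : c ≠ 0) (hT : (T : Matrix n n R) = transvection i j c)
    (h : Commute (mk N) (mk T)) : Commute (single i j 1) (N : Matrix n n R) := by
  have htr : trace (T : Matrix n n R) ≠ 0 := by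
    have : Nonempty n := ⟨i⟩
    simp [hT, transvection, trace_single_eq_of_ne _ _ _ hij]
  refine commute_single_of_commute_transvection hc ?_
  rw [← hT]
  exact (commute_of_commute_mk_of_trace_ne_zero h htr).units_val.symm

theorem mk_eq_one_of_commute_single [CommRing R] {N : GL n R}
    (h : Pairwise fun i j => Commute (single i j 1) (N : Matrix n n R)) : mk N = 1 := by
  obtain ⟨r, hr⟩ := mem_range_scalar_of_commute_single h
  rw [mk_eq_one, Subgroup.mem_center_iff]
  intro A
  ext1
  simp only [Units.val_mul, ← hr]
  exact (Matrix.scalar_commute r (Commute.all r) _).symm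

end GeneralLinearGroup

end Matrix

namespace Z2FreeZ3

open Matrix MatrixGroups UpperHalfPlane ProjGenLinGroup

noncomputable def S : GL (Fin 2) ℝ := .mkOfDetNeZero !![0, -1; 1, 0] (by simp)

noncomputable def U : GL (Fin 2) ℝ := .mkOfDetNeZero !![0, 1; -1, 1] (by simp)

lemma val_S : (S : Matrix (Fin 2) (Fin 2) ℝ) = !![0, -1; 1, 0] := rfl

lemma val_U : (U : Matrix (Fin 2) (Fin 2) ℝ) = !![0, 1; -1, 1] := rfl

lemma val_U_sq : ((U ^ 2 : GL (Fin 2) ℝ) : Matrix (Fin 2) (Fin 2) ℝ) = !![-1, 1; -1, 0] := by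
  rw [Units.val_pow_eq_pow_val, sq, val_U, mul_fin_two]
  norm_num

lemma val_S_mul_U_pow (k : ℕ) :
    (((S * U) ^ k : GL (Fin 2) ℝ) : Matrix (Fin 2) (Fin 2) ℝ) =
      transvection 0 1 (-(k : ℝ)) := by
  have hSU : ((S * U : GL (Fin 2) ℝ) : Matrix (Fin 2) (Fin 2) ℝ) = transvection 0 1 (-1) := by
    rw [Units.val_mul, val_S, val_U, mul_fin_two]
    ext i j
    fin_cases i <;> fin_cases j <;> simp [transvection]
  rw [Units.val_pow_eq_pow_val, hSU, transvection_pow (by decide), mul_neg_one]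

lemma val_U_mul_S_pow (k : ℕ) :
    (((U * S) ^ k : GL (Fin 2) ℝ) : Matrix (Fin 2) (Fin 2) ℝ) = transvection 1 0 (k : ℝ) := by
  have hUS : ((U * S : GL (Fin 2) ℝ) : Matrix (Fin 2) (Fin 2) ℝ) = transvection 1 0 1 := by
    rw [Units.val_mul, val_S, val_U, mul_fin_two]
    ext i j
    fin_cases i <;> fin_cases j <;> simp [transvection]
  rw [Units.val_pow_eq_pow_val, hUS, transvection_pow (by decide), mul_one]

lemma mk_S_sq : mk S ^ 2 = 1 := by
  rw [← map_pow, ← mk_scalar (n := Fin 2) (-1)]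
  congr 1
  ext i j
  fin_cases i <;> fin_cases j <;> simp [sq, val_S]

lemma mk_U_pow_three : mk U ^ 3 = 1 := by
  rw [← map_pow, ← mk_scalar (n := Fin 2) (-1)]
  congr 1
  ext i j
  fin_cases i <;> fin_cases j <;> simp [pow_succ, val_U]

lemma coe_S_smul (z : ℍ) : ((S • z : ℍ) : ℂ) = -(z : ℂ)⁻¹ := by
  rw [coe_smul_of_det_pos (by simp [S]), num, denom, val_S]
  simp [div_eq_mul_inv]

lemma coe_U_smul (z : ℍ) : ((U • z : ℍ) : ℂ) = (1 - (z : ℂ))⁻¹ := by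
  rw [coe_smul_of_det_pos (by simp [U]), num, denom, val_U]
  simp [neg_add_eq_sub]

lemma coe_U_sq_smul (z : ℍ) : ((U ^ 2 • z : ℍ) : ℂ) = 1 - (z : ℂ)⁻¹ := by
  rw [coe_smul_of_det_pos (by simp [U]), num, denom, val_U_sq]
  simp [neg_add_eq_sub, div_neg, sub_div, ne_zero z]

lemma re_S_smul_neg {z : ℍ} (hz : 0 < z.re) : (S • z).re < 0 := by
  rw [← coe_re, coe_S_smul, Complex.neg_re, Complex.inv_re, neg_neg_iff_pos]
  exact div_pos hz (normSq_pos z)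

lemma re_U_smul_pos {z : ℍ} (hz : z.re < 0) : 0 < (U • z).re := by
  have hne : (1 - (z : ℂ)) ≠ 0 := fun h => z.im_ne_zero (by simpa using congrArg Complex.im h)
  rw [← coe_re, coe_U_smul, Complex.inv_re]
  have hre : 0 < (1 - (z : ℂ)).re := by
    rw [Complex.sub_re, Complex.one_re, coe_re]
    linarith
  exact div_pos hre (Complex.normSq_pos.2 hne)

lemma re_U_sq_smul_pos {z : ℍ} (hz : z.re < 0) : 0 < (U ^ 2 • z).re := by
  rw [← coe_re, coe_U_sq_smul, Complex.sub_re, Complex.one_re, Complex.inv_re, sub_pos]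
  exact (div_neg_of_neg_of_pos hz (normSq_pos z)).trans one_pos

noncomputable def toPGL : Multiplicative (ZMod 2) ∗ Multiplicative (ZMod 3) →* PGL(2, ℝ) :=
  Monoid.Coprod.lift (ZMod.powMonoidHom 2 (mk S) mk_S_sq)
    (ZMod.powMonoidHom 3 (mk U) mk_U_pow_three)

open Pointwise in
theorem toPGL_injective : Function.Injective toPGL := by
  refine Monoid.Coprod.lift_injective_of_ping_pong _ _ (Or.inr (by simp))
    (X := {z : ℍ | z.re < 0}) (Y := {z : ℍ | 0 < z.re})
    ⟨⟨-1 + Complex.I, by simp⟩, by simp⟩ ⟨⟨1 + Complex.I, by simp⟩, by simp⟩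
    (Set.disjoint_left.2 fun _ h h' => lt_asymm (α := ℝ) h h') ?_ ?_
  · intro x hx
    obtain hx : (Multiplicative.toAdd x).val = 1 := by revert x; decide
    rw [ZMod.powMonoidHom_apply, hx, pow_one, Set.smul_set_subset_iff]
    exact fun z hz => re_S_smul_neg hz
  · intro x hx
    obtain hx | hx : (Multiplicative.toAdd x).val = 1 ∨ (Multiplicative.toAdd x).val = 2 := by
      revert x; decide
    all_goals rw [ZMod.powMonoidHom_apply, hx, Set.smul_set_subset_iff]; intro z hz
    · simpa using re_U_smul_pos hz
    · simpa [← map_pow] using re_U_sq_smul_pos hz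

theorem eq_one_of_commute_pow {P : PGL(2, ℝ)} {k l : ℕ} (hk : k ≠ 0) (hl : l ≠ 0)
    (hSU : Commute P (mk (S * U) ^ k)) (hUS : Commute P (mk (U * S) ^ l)) : P = 1 := by
  induction P using ProjGenLinGroup.induction_on with | mk N => ?_
  rw [← map_pow] at hSU hUS
  have h01 := GeneralLinearGroup.commute_single_of_commute_mk_transvection (by decide)
    (by simpa using hk) (val_S_mul_U_pow k) hSU
  have h10 := GeneralLinearGroup.commute_single_of_commute_mk_transvection (by decide)
    (by simpa using hl) (val_U_mul_S_pow l) hUS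
  refine GeneralLinearGroup.mk_eq_one_of_commute_single fun i j hij => ?_
  fin_cases i <;> fin_cases j <;> simp_all

end Z2FreeZ3

open Z2FreeZ3 in
/-- In the free product `ℤ/2 ∗ ℤ/3`, every nontrivial conjugacy class is infinite,
i.e. the group is ICC. -/
theorem stmt8 (g : Coprod (Multiplicative (ZMod 2)) (Multiplicative (ZMod 3))) (hg : g ≠ 1) :
    {h | ∃ γ : Coprod (Multiplicative (ZMod 2)) (Multiplicative (ZMod 3)),
        γ * g * γ⁻¹ = h}.Infinite := by
  intro hfin
  obtain ⟨k, hk, hSU⟩ :=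
    exists_pow_commute_of_finite_conjugates hfin (.inl (.ofAdd 1) * .inr (.ofAdd 1))
  obtain ⟨l, hl, hUS⟩ :=
    exists_pow_commute_of_finite_conjugates hfin (.inr (.ofAdd 1) * .inl (.ofAdd 1))
  refine hg (toPGL_injective ?_)
  rw [map_one]
  refine eq_one_of_commute_pow hk.ne' hl.ne' ?_ ?_
  · simpa [toPGL, ZMod.powMonoidHom_ofAdd_one] using hSU.map toPGL
  · simpa [toPGL, ZMod.powMonoidHom_ofAdd_one] using hUS.map toPGL
end

section
/- Let Γ = ℤ/2 ∗ ℤ/3, Λ = the restricted direct sum ⨁_{n∈ℕ} Γ, H = ⨁_{n∈ℕ} ℤ/2 viewed as a subgroup of Λ via the ℤ/2 factors, and I = Λ/H the coset space with left translation action of Λ. Then for every λ ∈ Λ with λ ≠ 1, there are infinitely many i ∈ I such that λ·i ≠ i. -/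
/-- The free product `ℤ/2 ∗ ℤ/3`. -/
abbrev GG : Type := Monoid.Coprod (Multiplicative (ZMod 2)) (Multiplicative (ZMod 3))

/-- `Λ = ⨁_{n ∈ ℕ} (ℤ/2 ∗ ℤ/3)`, the restricted direct sum, realized as the subgroup of
the full direct product consisting of finitely supported functions. -/
def Lam : Subgroup (ℕ → GG) where
  carrier := {f | {n | f n ≠ 1}.Finite}
  one_mem' := by simp
  mul_mem' := by
    intro a b ha hb
    refine (ha.union hb).subset ?_
    intro n hn
    by_contra h
    simp only [Set.mem_union, Set.mem_setOf_eq, not_or, ne_eq, not_not] at h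
    exact hn (by simp [Pi.mul_apply, h.1, h.2])
  inv_mem' := by
    intro a ha
    refine ha.subset ?_
    intro n hn
    simp only [Set.mem_setOf_eq, Pi.inv_apply, ne_eq, inv_eq_one] at hn ⊢
    exact hn

/-- `H = ⨁_{n ∈ ℕ} ℤ/2`, viewed as the subgroup of `Λ` of those elements all of whose
coordinates lie in the canonical copy of `ℤ/2` inside `ℤ/2 ∗ ℤ/3`. -/
def Hsub : Subgroup Lam where
  carrier := {f | ∀ n, (f : ℕ → GG) n ∈
    (Monoid.Coprod.inl : Multiplicative (ZMod 2) →* GG).range}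
  one_mem' := by
    intro n
    exact ⟨1, by simp⟩
  mul_mem' := by
    intro a b ha hb n
    exact mul_mem (ha n) (hb n)
  inv_mem' := by
    intro a ha n
    exact inv_mem (ha n)

/-!
Let `K ≤ Γ` be the copy of `ℤ/2`, generated by `a`, and let `b` generate `ℤ/3`. An element `λ`
fixes the coset `xH` iff every coordinate of `x⁻¹λx` lies in `K`.

The representation `Γ → M₂(ℤ)` with `a ↦ diag(1, -1)` and `b ↦ [[0, -1], [1, -1]]` sends `K` to
matrices with first column `(1, 0)`, while `ba ↦ [[0, 1], [1, 1]]`, whose positive powers have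
positive entries. Hence the powers of `ba` lie in pairwise distinct cosets of `K`, and no conjugate
of `a` by a positive power of `ba` lies in `K`.

If some coordinate `λ m` is outside `K`, the elements `(ba)^k` placed in another coordinate give
infinitely many moved cosets. Otherwise some coordinate is `λ n = a`, and the elements `(ba)^(k+1)`
placed in coordinate `n` do.
-/

open Function

theorem QuotientGroup.smul_mk_eq_self_iff {G : Type*} [Group G] (H : Subgroup G) (l x : G) :
    l • (x : G ⧸ H) = x ↔ x⁻¹ * l * x ∈ H := by
  rw [MulAction.Quotient.smul_mk, eq_comm, QuotientGroup.eq, smul_eq_mul, mul_assoc]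

theorem QuotientGroup.injective_mk_pow {G : Type*} [Group G] {H : Subgroup G} {g : G}
    (hg : ∀ m, g ^ (m + 1) ∉ H) : Injective fun k : ℕ => ((g ^ k : G) : G ⧸ H) := by
  refine Injective.of_lt_imp_ne fun j k hjk h => hg (k - j - 1) ?_
  have hk : g ^ k = g ^ j * g ^ (k - j - 1 + 1) := by
    rw [← pow_add]
    congr 1
    omega
  rwa [QuotientGroup.eq, hk, inv_mul_cancel_left] at h

namespace GG

abbrev K : Subgroup GG := (Monoid.Coprod.inl : Multiplicative (ZMod 2) →* GG).range

def a : GG := Monoid.Coprod.inl (Multiplicative.ofAdd 1)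

def b : GG := Monoid.Coprod.inr (Multiplicative.ofAdd 1)

theorem eq_a_of_mem_K {w : GG} (hw : w ∈ K) (hw₁ : w ≠ 1) : w = a := by
  obtain ⟨x, rfl⟩ := hw
  have hx : x ≠ 1 := by rintro rfl; exact hw₁ (map_one _)
  have : x = Multiplicative.ofAdd 1 := by
    clear hw₁
    revert x
    decide
  rw [this, a]

def repZ2 : Multiplicative (ZMod 2) →* Matrix (Fin 2) (Fin 2) ℤ where
  toFun x := !![1, 0; 0, -1] ^ (Multiplicative.toAdd x).val
  map_one' := by decide
  map_mul' := by decide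

def repZ3 : Multiplicative (ZMod 3) →* Matrix (Fin 2) (Fin 2) ℤ where
  toFun x := !![0, -1; 1, -1] ^ (Multiplicative.toAdd x).val
  map_one' := by decide
  map_mul' := by decide

def rep : GG →* Matrix (Fin 2) (Fin 2) ℤ := Monoid.Coprod.lift repZ2 repZ3

theorem rep_a : rep a = !![1, 0; 0, -1] := by
  simp only [rep, a, Monoid.Coprod.lift_apply_inl, repZ2, MonoidHom.coe_mk, OneHom.coe_mk]
  decide

theorem rep_ba : rep (b * a) = !![0, 1; 1, 1] := by
  rw [map_mul, rep_a]
  simp only [rep, b, Monoid.Coprod.lift_apply_inr, repZ3, MonoidHom.coe_mk, OneHom.coe_mk]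
  decide

theorem rep_of_mem_K {w : GG} (hw : w ∈ K) : rep w 0 0 = 1 ∧ rep w 1 0 = 0 := by
  obtain ⟨x, rfl⟩ := hw
  simp only [rep, Monoid.Coprod.lift_apply_inl, repZ2, MonoidHom.coe_mk, OneHom.coe_mk]
  revert x
  decide

theorem rep_one_zero_of_conj_a_mem_K {g : GG} (h : g⁻¹ * a * g ∈ K) : rep g 1 0 = 0 := by
  have hcomm : rep a * rep g = rep g * rep (g⁻¹ * a * g) := by
    rw [← map_mul, ← map_mul]
    group
  generalize g⁻¹ * a * g = w at h hcomm
  obtain ⟨h₀₀, h₁₀⟩ := rep_of_mem_K h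
  have hneg : -rep g 1 0 = rep g 1 0 := by
    simpa [Matrix.mul_apply, rep_a, h₀₀, h₁₀] using congrArg (· 1 0) hcomm
  omega

theorem fib_matrix_pow_succ_pos (k : ℕ) :
    0 < (!![0, 1; 1, 1] ^ (k + 1) : Matrix (Fin 2) (Fin 2) ℤ) 1 0 ∧
      0 < (!![0, 1; 1, 1] ^ (k + 1) : Matrix (Fin 2) (Fin 2) ℤ) 1 1 := by
  induction k with
  | zero => decide
  | succ k ih =>
    rw [pow_succ]
    simp only [Matrix.mul_apply, Fin.sum_univ_two, Matrix.of_apply, Matrix.cons_val',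
      Matrix.cons_val_zero, Matrix.cons_val_one, Matrix.cons_val_fin_one, mul_zero, mul_one, zero_add]
    omega

theorem rep_pow_ba_one_zero_pos (k : ℕ) : 0 < rep ((b * a) ^ (k + 1)) 1 0 := by
  rw [map_pow, rep_ba]
  exact (fib_matrix_pow_succ_pos k).1

theorem pow_ba_not_mem_K (k : ℕ) : (b * a) ^ (k + 1) ∉ K := fun h =>
  (rep_pow_ba_one_zero_pos k).ne' (rep_of_mem_K h).2

theorem conj_a_pow_ba_not_mem_K (k : ℕ) : ((b * a) ^ (k + 1))⁻¹ * a * (b * a) ^ (k + 1) ∉ K :=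
  fun h => (rep_pow_ba_one_zero_pos k).ne' (rep_one_zero_of_conj_a_mem_K h)

end GG

namespace Lam

open GG

def single (n : ℕ) (g : GG) : Lam :=
  ⟨Pi.mulSingle n g, (Set.finite_singleton n).subset Pi.mulSupport_mulSingle_subset⟩

@[simp]
theorem coe_single (n : ℕ) (g : GG) : (single n g : ℕ → GG) = Pi.mulSingle n g := rfl

theorem injective_mk_single (n : ℕ) {g : ℕ → GG} (hg : Injective fun k => (g k : GG ⧸ K)) :
    Injective fun k => (single n (g k) : Lam ⧸ Hsub) := by
  intro j k h
  apply hg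
  simp only [QuotientGroup.eq] at h ⊢
  simpa using h n

theorem infinite_moved {l : Lam} {n m : ℕ} {g : ℕ → GG}
    (hg : Injective fun k => (g k : GG ⧸ K))
    (hmoved : ∀ k, (((single n (g k))⁻¹ * l * single n (g k) : Lam) : ℕ → GG) m ∉ K) :
    {i : Lam ⧸ Hsub | l • i ≠ i}.Infinite := by
  refine Set.infinite_of_injective_forall_mem (injective_mk_single n hg) fun k h => hmoved k ?_
  exact (QuotientGroup.smul_mk_eq_self_iff Hsub l _).1 h m

end Lam

open GG Lam in
/-- For every `λ ∈ Λ` with `λ ≠ 1`, there are infinitely many cosets `i ∈ Λ/H` with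
`λ · i ≠ i`, for the left translation action of `Λ` on `I = Λ/H`. -/
theorem stmt9 (l : Lam) (hl : l ≠ 1) :
    {i : Lam ⧸ Hsub | l • i ≠ i}.Infinite := by
  have hpow := QuotientGroup.injective_mk_pow (H := K) pow_ba_not_mem_K
  by_cases hK : ∀ n, (l : ℕ → GG) n ∈ K
  · obtain ⟨n, hn⟩ : ∃ n, (l : ℕ → GG) n ≠ 1 := by
      by_contra! h
      exact hl (Subtype.ext (funext h))
    have hla : (l : ℕ → GG) n = a := eq_a_of_mem_K (hK n) hn
    refine infinite_moved (n := n) (m := n) (hpow.comp Nat.succ_injective) fun k => ?_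
    simpa [hla] using conj_a_pow_ba_not_mem_K k
  · obtain ⟨m, hm⟩ := not_forall.1 hK
    refine infinite_moved (n := m + 1) (m := m) hpow fun k => ?_
    simpa [Pi.mulSingle_eq_of_ne] using hm
end

section
/- Let R be a countable nonsingular equivalence relation on X, G a locally compact second countable abelian group, Ω ∈ Z¹(R,G) a cocycle. If the skew-product R ×_Ω G is ergodic, then R is ergodic and the map sending p ∈ Ĝ (the Pontryagin dual) to the cohomology class of the 𝕋-valued cocycle (x,y) ↦ ⟨p, Ω(x,y)⟩ is injective on Ĝ. -/
/-!
The skew product only relates points of `X × G` lying over `R`-related points, so invariant sets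
pulled back from `X` are invariant, which gives ergodicity of `R`. If `p (Ω x y) / q (Ω x y)` is
the coboundary of `u`, then `(x, g) ↦ u x / (p / q) g` is invariant under the skew product,
hence a.e. constant; by Fubini the character `p / q` is then a.e. constant on `G`, and a
continuous function that is a.e. constant for Haar measure is constant, so `p / q = 1`.
-/

open MeasureTheory

variable {X : Type*} [MeasurableSpace X] {G : Type*} [CommGroup G]

/-- The skew product `R ×_Ω G`. -/
def skewProductRel (R : X → X → Prop) (Ω : X → X → G) : X × G → X × G → Prop :=
  fun p q => R p.1 q.1 ∧ Ω p.1 q.1 = p.2 * q.2⁻¹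

def ErgodicRel {Z : Type*} [MeasurableSpace Z] (μ : Measure Z) (R : Z → Z → Prop) : Prop :=
  ∀ A : Set Z, MeasurableSet A → (∀ x y, R x y → (x ∈ A ↔ y ∈ A)) → μ A = 0 ∨ μ Aᶜ = 0

open Filter

namespace ErgodicRel

variable {Z : Type*} [MeasurableSpace Z] {m : Measure Z} {S : Z → Z → Prop}

theorem exists_ae_eq_const {Y : Type*} [MeasurableSpace Y] [MeasurableSpace.CountablySeparated Y]
    [Nonempty Y] (h : ErgodicRel m S) {f : Z → Y} (hf : Measurable f)
    (hinv : ∀ z w, S z w → f z = f w) : ∃ c, f =ᵐ[m] Function.const Z c := by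
  refine exists_eventuallyEq_const_of_forall_separating MeasurableSet fun U hU => ?_
  have hUinv : ∀ z w, S z w → (z ∈ f ⁻¹' U ↔ w ∈ f ⁻¹' U) := fun z w hzw => by
    simp only [Set.mem_preimage, hinv z w hzw]
  rcases h _ (hf hU) hUinv with hnull | hconull
  · exact Or.inr (measure_eq_zero_iff_ae_notMem.mp hnull)
  · exact Or.inl (ae_iff.mpr hconull)

theorem fst {α β : Type*} [MeasurableSpace α] [MeasurableSpace β] {μ : Measure α}
    {ν : Measure β} [SFinite ν] [NeZero ν] {S : α × β → α × β → Prop} {R : α → α → Prop}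
    (h : ErgodicRel (μ.prod ν) S) (hS : ∀ z w, S z w → R z.1 w.1) : ErgodicRel μ R := by
  intro A hA hinv
  have hprod := h (A ×ˢ Set.univ) (hA.prod .univ) fun z w hzw => by
    simp only [Set.mem_prod, Set.mem_univ, and_true, hinv _ _ (hS z w hzw)]
  simpa only [Set.compl_prod_eq_union, Set.compl_univ, Set.prod_empty, Set.union_empty,
    Measure.prod_prod, mul_eq_zero, NeZero.ne, or_false] using hprod

end ErgodicRel

theorem skewProductRel.div_map_eq {α H M F : Type*} [CommGroup H] [CommGroup M] [FunLike F H M]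
    [MonoidHomClass F H M] {R : α → α → Prop} {Ω : α → α → H} {φ : F} {u : α → M}
    (hcob : ∀ x y, R x y → φ (Ω x y) = u x / u y) {z w : α × H}
    (h : skewProductRel R Ω z w) : u z.1 / φ z.2 = u w.1 / φ w.2 := by
  have hφ := hcob z.1 w.1 h.1
  rw [h.2, ← div_eq_mul_inv, map_div] at hφ
  exact div_eq_div_iff_div_eq_div.mp hφ.symm

theorem ContinuousMonoidHom.eq_one_of_ae_eq_const {G M : Type*} [Monoid G] [TopologicalSpace G]
    [MeasurableSpace G] [Monoid M] [TopologicalSpace M] [T2Space M] {μ : Measure G}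
    [μ.IsOpenPosMeasure] (φ : ContinuousMonoidHom G M) {d : M}
    (h : ⇑φ =ᵐ[μ] Function.const G d) : φ = 1 := by
  have hconst : ⇑φ = Function.const G d :=
    ((map_continuous φ).ae_eq_iff_eq μ continuous_const).mp h
  have hd : d = 1 := by simpa using (congr_fun hconst 1).symm
  ext g
  simp [hconst, hd]

theorem stmt13_general [TopologicalSpace G] [LocallyCompactSpace G]
    [SecondCountableTopology G] [MeasurableSpace G] [BorelSpace G]
    [MeasurableSpace Circle] [BorelSpace Circle]
    (μ : Measure X) [IsProbabilityMeasure μ]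
    (ν : Measure G) [ν.IsHaarMeasure]
    (R : X → X → Prop)
    (Ω : X → X → G)
    (herg : ErgodicRel (μ.prod ν) (skewProductRel R Ω)) :
    ErgodicRel μ R ∧
    ∀ p q : PontryaginDual G,
      (∃ u : X → Circle, Measurable u ∧
        ∀ x y, R x y → p (Ω x y) * (q (Ω x y))⁻¹ = u x * (u y)⁻¹) → p = q := by
  refine ⟨herg.fst fun _ _ h => h.1, fun p q ⟨u, hu, hcob⟩ => ?_⟩
  let φ : PontryaginDual G := p / q
  have hcobφ : ∀ x y, R x y → φ (Ω x y) = u x / u y := fun x y hxy =>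
    (div_eq_mul_inv _ _).trans ((hcob x y hxy).trans (div_eq_mul_inv _ _).symm)
  have hmeas : Measurable fun z : X × G => u z.1 / φ z.2 :=
    (hu.comp measurable_fst).div ((map_continuous φ).measurable.comp measurable_snd)
  obtain ⟨c, hc⟩ := herg.exists_ae_eq_const hmeas fun _ _ h => h.div_map_eq hcobφ
  obtain ⟨x, hx⟩ := (Measure.ae_ae_of_ae_prod hc).exists
  have hφ : ⇑φ =ᵐ[ν] Function.const G (u x / c) :=
    hx.mono fun g (hg : u x / φ g = c) => by rw [← hg, Function.const_apply, div_div_cancel]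
  exact div_eq_one.mp (φ.eq_one_of_ae_eq_const hφ)

/-- If the skew product `R ×_Ω G` (with respect to the product of the measure class of
`X` and the Haar measure class of the locally compact second countable abelian group `G`)
is ergodic, then `R` is ergodic and the map `p ↦ [Ω̂(p)]` from the Pontryagin dual `Ĝ`
to `H¹(R, 𝕋)` is injective. -/
theorem stmt13 [TopologicalSpace G] [IsTopologicalGroup G] [LocallyCompactSpace G]
    [SecondCountableTopology G] [MeasurableSpace G] [BorelSpace G]
    [MeasurableSpace Circle] [BorelSpace Circle]
    (μ : Measure X) [IsProbabilityMeasure μ]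
    (ν : Measure G) [ν.IsHaarMeasure]
    (R : X → X → Prop) (hR : Equivalence R)
    (Ω : X → X → G) (hΩm : Measurable fun p : X × X => Ω p.1 p.2)
    (hΩcoc : ∀ x y z, R x y → R y z → Ω x y * Ω y z = Ω x z)
    (herg : ErgodicRel (μ.prod ν) (skewProductRel R Ω)) :
    ErgodicRel μ R ∧
    ∀ p q : PontryaginDual G,
      (∃ u : X → Circle, Measurable u ∧
        ∀ x y, R x y → p (Ω x y) * (q (Ω x y))⁻¹ = u x * (u y)⁻¹) → p = q :=
  stmt13_general μ ν R Ω herg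
end
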